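/- Let T be the shortcut Collatz map and suppose n, T(n), …, T^{j−1}(n) (j ≥ 2) are all odd except T^k(n) with 1 ≤ k ≤ j−1, and n < 2^j. Then 2^k divides n+1, and writing n + 1 = 2^k·A, there is a positive integer B with 1 + 3^k·A = 2^{j−k}·B, where 3^k·A and 2^{j−k}·B are coprime. -/

import Mathlib

/-!
Along a run of odd iterates `T x + 1 = 3 (x + 1) / 2`, so `d` odd steps give
`2^d (T^d m + 1) = 3^d (m + 1)`. The `k` odd steps starting at `n` force `2^k ∣ n + 1` and
`T^k n + 1 = 3^k A`. The even iterate `T^k n` is halved, and the `j - k - 1` odd steps after it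
force `2^(j-k-1) ∣ T^(k+1) n + 1 = (T^k n + 2) / 2`, i.e. `2^(j-k) ∣ 1 + 3^k A`.
Coprimality holds because `3^k A` and `1 + 3^k A` are consecutive.
-/

/-- The shortcut Collatz map. -/
def T (n : ℕ) : ℕ := if n % 2 = 1 then (3 * n + 1) / 2 else n / 2

lemma two_mul_T_add_one_of_odd {x : ℕ} (hx : x % 2 = 1) : 2 * (T x + 1) = 3 * (x + 1) := by
  simp only [T, hx, if_pos]
  omega

lemma two_mul_T_of_even {x : ℕ} (hx : x % 2 = 0) : 2 * T x = x := by
  simp only [T, hx, zero_ne_one, if_false]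
  omega

lemma two_pow_mul_iterate_T_add_one {m d : ℕ} (hodd : ∀ i < d, T^[i] m % 2 = 1) :
    2 ^ d * (T^[d] m + 1) = 3 ^ d * (m + 1) := by
  induction d with
  | zero => simp
  | succ d ih =>
    calc 2 ^ (d + 1) * (T^[d + 1] m + 1)
        = 2 ^ d * (2 * (T (T^[d] m) + 1)) := by rw [Function.iterate_succ_apply']; ring
      _ = 3 * (2 ^ d * (T^[d] m + 1)) := by
        rw [two_mul_T_add_one_of_odd (hodd d d.lt_succ_self)]; ring
      _ = 3 ^ (d + 1) * (m + 1) := by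
        rw [ih fun i hi => hodd i (hi.trans d.lt_succ_self)]; ring

lemma two_pow_dvd_add_one_of_odd_run {m d : ℕ} (hodd : ∀ i < d, T^[i] m % 2 = 1) :
    2 ^ d ∣ m + 1 :=
  (Nat.Coprime.pow d d (by norm_num : Nat.Coprime 2 3)).dvd_of_dvd_mul_left
    ⟨_, (two_pow_mul_iterate_T_add_one hodd).symm⟩

lemma iterate_T_add_one_of_odd_run {m d : ℕ} (hodd : ∀ i < d, T^[i] m % 2 = 1) :
    T^[d] m + 1 = 3 ^ d * ((m + 1) / 2 ^ d) := by
  obtain ⟨A, hA⟩ := two_pow_dvd_add_one_of_odd_run hodd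
  have h := two_pow_mul_iterate_T_add_one hodd
  rw [hA, mul_left_comm] at h
  rw [hA, Nat.mul_div_cancel_left _ (by positivity)]
  exact Nat.eq_of_mul_eq_mul_left (by positivity) h

theorem stmt_11_general (j k n : ℕ) (hj : 2 ≤ j) (hkj : k ≤ j - 1)
    (hpar : ∀ i < j, (T^[i] n) % 2 = 0 ↔ i = k) :
    2 ^ k ∣ n + 1 ∧
      ∃ B : ℕ, 0 < B ∧ 1 + 3 ^ k * ((n + 1) / 2 ^ k) = 2 ^ (j - k) * B ∧
        Nat.Coprime (3 ^ k * ((n + 1) / 2 ^ k)) (2 ^ (j - k) * B) := by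
  have hodd_before : ∀ i < k, T^[i] n % 2 = 1 := fun i hi => by
    have := hpar i (by omega); omega
  have hodd_after : ∀ i < j - (k + 1), T^[i] (T^[k + 1] n) % 2 = 1 := fun i hi => by
    rw [← Function.iterate_add_apply]
    have := hpar (i + (k + 1)) (by omega); omega
  have heven : T^[k] n % 2 = 0 := (hpar k (by omega)).2 rfl
  have hhalve : 2 * (T^[k + 1] n + 1) = T^[k] n + 2 := by
    rw [Function.iterate_succ_apply', mul_add, two_mul_T_of_even heven]
  have hdvd : 2 ^ (j - k) ∣ 1 + 3 ^ k * ((n + 1) / 2 ^ k) := by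
    rw [← iterate_T_add_one_of_odd_run hodd_before, show j - k = j - (k + 1) + 1 by omega,
      pow_succ', show 1 + (T^[k] n + 1) = 2 * (T^[k + 1] n + 1) by omega]
    exact mul_dvd_mul_left 2 (two_pow_dvd_add_one_of_odd_run hodd_after)
  obtain ⟨B, hB⟩ := hdvd
  refine ⟨two_pow_dvd_add_one_of_odd_run hodd_before, B, Nat.pos_of_ne_zero ?_, hB, ?_⟩
  · rintro rfl
    simp at hB
  · rw [← hB]
    exact Nat.coprime_add_self_right.2 (Nat.coprime_one_right _)

theorem stmt_11 (j k n : ℕ) (hj : 2 ≤ j) (hk1 : 1 ≤ k) (hkj : k ≤ j - 1)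
    (hlt : n < 2 ^ j)
    (hpar : ∀ i < j, (T^[i] n) % 2 = 0 ↔ i = k) :
    2 ^ k ∣ n + 1 ∧
      ∃ B : ℕ, 0 < B ∧ 1 + 3 ^ k * ((n + 1) / 2 ^ k) = 2 ^ (j - k) * B ∧
        Nat.Coprime (3 ^ k * ((n + 1) / 2 ^ k)) (2 ^ (j - k) * B) :=
  stmt_11_general j k n hj hkj hpar
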